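/- Let S be a set and f : Set S → Set S monotone, with μ f its least fixpoint. Then there exists a well-ordering ≺ on μ f such that (μ f, ≺) is a support ordering for f, i.e. every x ∈ μ f satisfies x ∈ f({x' ∈ μ f | x' ≺ x}). -/

import Mathlib

/-- `(X, r)` is a support ordering for `f`. -/
def IsSupportOrdering {S : Type*} (f : Set S → Set S) (X : Set S) (r : S → S → Prop) : Prop :=
  ∀ x ∈ X, x ∈ f {x' ∈ X | r x' x}

/-- `r` is a well-ordering on the subset `X`: an irreflexive, transitive relation on `X`
in which any two distinct elements of `X` are comparable, and which is well-founded. -/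
def IsWellOrderingOn {S : Type*} (r : S → S → Prop) (X : Set S) : Prop :=
  (∀ x y, r x y → x ∈ X ∧ y ∈ X) ∧
  (∀ x, ¬ r x x) ∧ Transitive r ∧
  (∀ x ∈ X, ∀ y ∈ X, x ≠ y → r x y ∨ r y x) ∧
  WellFounded r

/-! Rank each element of `μ f` by the first stage at which it enters the transfinite iteration
of `f` from `∅`. Stage `α` is `⋃ β < α, f (stage β)`, so an element of rank `α` lies in `f` of a
set of elements of smaller rank: comparing ranks is a well-founded support ordering. Support
orderings are upward closed, so any well-order extending it (breaking ties within a rank) is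
again one. -/

open OrdinalApprox

lemma IsSupportOrdering.mono {S : Type*} {f : Set S → Set S} (hf : Monotone f) {X : Set S}
    {r r' : S → S → Prop} (hr : IsSupportOrdering f X r)
    (h : ∀ x ∈ X, ∀ y ∈ X, r x y → r' x y) : IsSupportOrdering f X r' :=
  fun x hx => hf (fun y hy => Set.mem_sep hy.1 (h y hy.1 x hx hy.2)) (hr x hx)

lemma isWellOrderingOn_restrict {S : Type*} (s : S → S → Prop) [IsWellOrder S s] (X : Set S) :
    IsWellOrderingOn (fun x y => x ∈ X ∧ y ∈ X ∧ s x y) X :=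
  ⟨fun _ _ h => ⟨h.1, h.2.1⟩,
    fun x h => irrefl_of s x h.2.2,
    fun _ _ _ hab hbc => ⟨hab.1, hbc.2.1, trans_of s hab.2.2 hbc.2.2⟩,
    fun x hx y hy hne => (trichotomous_of s x y).imp (fun h => ⟨hx, hy, h⟩)
      fun h => ⟨hy, hx, h.resolve_left hne⟩,
    Subrelation.wf (fun h => h.2.2) IsWellFounded.wf⟩

lemma lfpApprox_bot_le_lfp {α : Type*} [CompleteLattice α] (F : α →o α) (a : Ordinal) :
    lfpApprox F ⊥ a ≤ F.lfp :=
  lfpApprox_le_of_mem_fixedPoints F (OrderHom.isFixedPt_lfp F) bot_le a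

section lfpRank

variable {S : Type*} (F : Set S →o Set S)

noncomputable def lfpRank (x : S) : Ordinal :=
  sInf {a | x ∈ lfpApprox F ⊥ a}

variable {F}

lemma mem_lfpApprox_lfpRank {x : S} (hx : x ∈ F.lfp) : x ∈ lfpApprox F ⊥ (lfpRank F x) := by
  refine csInf_mem (s := {a | x ∈ lfpApprox F ⊥ a}) ⟨(Order.succ (Cardinal.mk (Set S))).ord, ?_⟩
  rwa [Set.mem_ofPred_eq, lfpApprox_ord_eq_lfp]

lemma lfpRank_le {x : S} {a : Ordinal} (hx : x ∈ lfpApprox F ⊥ a) : lfpRank F x ≤ a :=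
  csInf_le' hx

lemma exists_lt_mem_apply_lfpApprox {x : S} {a : Ordinal} (hx : x ∈ lfpApprox F ⊥ a) :
    ∃ b < a, x ∈ F (lfpApprox F ⊥ b) := by
  rw [lfpApprox] at hx
  simpa using hx

variable (F)

lemma isSupportOrdering_lfpRank :
    IsSupportOrdering F F.lfp (fun y x => lfpRank F y < lfpRank F x) := by
  intro x hx
  obtain ⟨b, hb, hxb⟩ := exists_lt_mem_apply_lfpApprox (mem_lfpApprox_lfpRank hx)
  exact F.monotone
    (fun y hy => Set.mem_sep (lfpApprox_bot_le_lfp F b hy) ((lfpRank_le hy).trans_lt hb)) hxb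

end lfpRank

theorem lfp_wellOrdered_support {S : Type*} (f : Set S → Set S) (hf : Monotone f) :
    ∃ r : S → S → Prop,
      IsWellOrderingOn r (OrderHom.lfp ⟨f, hf⟩) ∧
      IsSupportOrdering f (OrderHom.lfp ⟨f, hf⟩) r := by
  set F : Set S →o Set S := ⟨f, hf⟩
  have : IsWellFounded S (InvImage (· < ·) (lfpRank F)) := ⟨InvImage.wf _ Ordinal.lt_wf⟩
  obtain ⟨s, hs, _⟩ := IsWellFounded.exists_well_order_ge (InvImage (· < ·) (lfpRank F))
  refine ⟨fun x y => x ∈ F.lfp ∧ y ∈ F.lfp ∧ s x y, isWellOrderingOn_restrict s _, ?_⟩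
  exact (isSupportOrdering_lfpRank F).mono hf fun y hy x hx h => ⟨hy, hx, hs y x h⟩
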